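/- Let P_(·) be an irreducible and aperiodic G-stochastic function defined on A with gcd(A) = 1. Then there exists n_0 ∈ ℕ_+ such that for every pair of states i, j ∈ G there is a word 𝐛 with depth s(𝐛) = n_0 and P_𝐛(i,j) > 0. -/

import Mathlib

open MeasureTheory
open scoped BigOperators

/-- The matrix of a word `𝐚 = (a_1, …, a_n)` (encoded as a list `[a_1, …, a_n]`),
namely `P_𝐚 = P_(a_n) ⋯ P_(a_1)`, so that `wordK P l i j` is the `(i,j)` entry. -/
noncomputable def wordK {G : Type*} [Fintype G] [DecidableEq G]
    (P : ℕ → G → G → ℝ) : List ℕ → G → G → ℝ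
  | [] => fun i j => if i = j then 1 else 0
  | a :: l => fun i j => ∑ m, wordK P l i m * P a m j

/-- A word over the alphabet `A`: a nonempty finite tuple with entries in `A`. -/
def IsWord (A : Set ℕ) (l : List ℕ) : Prop := l ≠ [] ∧ ∀ a ∈ l, a ∈ A

/-- `i` communicates with `j` if `P_𝐚(i,j) > 0` for some word `𝐚`. -/
def Communicates {G : Type*} [Fintype G] [DecidableEq G]
    (A : Set ℕ) (P : ℕ → G → G → ℝ) (i j : G) : Prop :=
  ∃ l : List ℕ, IsWord A l ∧ 0 < wordK P l i j

/-- `i` and `j` intercommunicate (every state intercommunicates with itself). -/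
def Intercommunicates {G : Type*} [Fintype G] [DecidableEq G]
    (A : Set ℕ) (P : ℕ → G → G → ℝ) (i j : G) : Prop :=
  i = j ∨ (Communicates A P i j ∧ Communicates A P j i)

/-- An intercommunicating class: an equivalence class of the intercommunication relation. -/
def IsInterClass {G : Type*} [Fintype G] [DecidableEq G]
    (A : Set ℕ) (P : ℕ → G → G → ℝ) (C : Set G) : Prop :=
  ∃ i : G, C = {j | Intercommunicates A P i j}

/-- A set `C` is closed if whenever `i ∈ C` communicates with `j`, then `j ∈ C`. -/
def IsClosedClass {G : Type*} [Fintype G] [DecidableEq G]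
    (A : Set ℕ) (P : ℕ → G → G → ℝ) (C : Set G) : Prop :=
  ∀ i ∈ C, ∀ j : G, Communicates A P i j → j ∈ C

/-- `d` is the greatest common divisor of the set `S ⊆ ℕ`. -/
def IsGCDOfSet (S : Set ℕ) (d : ℕ) : Prop :=
  (∀ n ∈ S, d ∣ n) ∧ ∀ e : ℕ, (∀ n ∈ S, e ∣ n) → e ∣ d

/-- The set of depths `s(𝐚)` of words `𝐚` with `P_𝐚(i,i) > 0`. -/
def ReturnDepths {G : Type*} [Fintype G] [DecidableEq G]
    (A : Set ℕ) (P : ℕ → G → G → ℝ) (i : G) : Set ℕ :=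
  {s | ∃ l : List ℕ, IsWord A l ∧ 0 < wordK P l i i ∧ l.sum = s}

/-- `E` is measurable with respect to the coordinates `(x_m)_{m < n}`. -/
def PastMeasurable {G : Type*} [MeasurableSpace G] (n : ℤ) (E : Set (ℤ → G)) : Prop :=
  MeasurableSet[MeasurableSpace.comap
    (fun x : ℤ → G => fun m : {m : ℤ // m < n} => x m.1) MeasurableSpace.pi] E

/-- `μ` is compatible with the imitation kernel
`p(g | w_{-1}, w_{-2}, …) = ∑_{k ∈ A} θ_k P_(k)(w_{-k}, g)` (here `θ` vanishes off `A`). -/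
def Compatible {G : Type*} [MeasurableSpace G] (θ : ℕ → ℝ) (P : ℕ → G → G → ℝ)
    (μ : Measure (ℤ → G)) : Prop :=
  ∀ (n : ℤ) (g : G) (E : Set (ℤ → G)), PastMeasurable n E →
    (μ (E ∩ {x | x n = g})).toReal
      = ∫ x in E, (∑' k : ℕ, θ k * P k (x (n - (k : ℤ))) g) ∂μ

/-! The return depths at a state are closed under addition and have gcd 1, so they contain every
large enough integer. Walking such a loop at `i` before a fixed word from `i` to `j` therefore
reaches every large enough depth, and finitely many pairs `(i, j)` give a common bound. -/

section

variable {G : Type*} [Fintype G] [DecidableEq G] {P : ℕ → G → G → ℝ}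

lemma wordK_nonneg {l : List ℕ} (hl : ∀ a ∈ l, ∀ i j : G, 0 ≤ P a i j) (i j : G) :
    0 ≤ wordK P l i j := by
  induction l generalizing j with
  | nil => unfold wordK; split_ifs <;> norm_num
  | cons a l ih =>
    exact Finset.sum_nonneg fun m _ => mul_nonneg
      (ih (fun b hb => hl b (List.mem_cons_of_mem _ hb)) m) (hl a List.mem_cons_self m j)

lemma wordK_append (l₁ l₂ : List ℕ) (i j : G) :
    wordK P (l₁ ++ l₂) i j = ∑ m, wordK P l₂ i m * wordK P l₁ m j := by
  induction l₁ generalizing j with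
  | nil => simp [wordK]
  | cons a l ih =>
    simp only [List.cons_append, wordK, ih, Finset.sum_mul, Finset.mul_sum]
    rw [Finset.sum_comm]
    exact Finset.sum_congr rfl fun _ _ => Finset.sum_congr rfl fun _ _ => by ring

lemma wordK_append_pos {l₁ l₂ : List ℕ} (h₁ : ∀ a ∈ l₁, ∀ i j : G, 0 ≤ P a i j)
    (h₂ : ∀ a ∈ l₂, ∀ i j : G, 0 ≤ P a i j) {i m j : G}
    (hl₂ : 0 < wordK P l₂ i m) (hl₁ : 0 < wordK P l₁ m j) :
    0 < wordK P (l₁ ++ l₂) i j := by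
  rw [wordK_append]
  exact Finset.sum_pos' (fun k _ => mul_nonneg (wordK_nonneg h₂ i k) (wordK_nonneg h₁ k j))
    ⟨m, Finset.mem_univ m, mul_pos hl₂ hl₁⟩

lemma IsWord.append {A : Set ℕ} {l₁ l₂ : List ℕ} (h₁ : IsWord A l₁) (h₂ : IsWord A l₂) :
    IsWord A (l₁ ++ l₂) :=
  ⟨by simp [h₁.1], fun a ha => (List.mem_append.mp ha).elim (h₁.2 a) (h₂.2 a)⟩

lemma add_mem_returnDepths {A : Set ℕ} (hP : ∀ k ∈ A, ∀ i j : G, 0 ≤ P k i j) {i : G}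
    {x y : ℕ} (hx : x ∈ ReturnDepths A P i) (hy : y ∈ ReturnDepths A P i) :
    x + y ∈ ReturnDepths A P i := by
  obtain ⟨l₁, hw₁, hpos₁, rfl⟩ := hx
  obtain ⟨l₂, hw₂, hpos₂, rfl⟩ := hy
  exact ⟨l₁ ++ l₂, hw₁.append hw₂,
    wordK_append_pos (fun a ha => hP a (hw₁.2 a ha)) (fun a ha => hP a (hw₂.2 a ha)) hpos₂ hpos₁,
    List.sum_append⟩

lemma exists_word_sum_eq_of_ge {A : Set ℕ} (hP : ∀ k ∈ A, ∀ i j : G, 0 ≤ P k i j)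
    {i j : G} {l : List ℕ} (hl : IsWord A l) (hpos : 0 < wordK P l i j) {N : ℕ}
    (hN : ∀ n ≥ N, n ∈ ReturnDepths A P i) {n : ℕ} (hn : N + l.sum ≤ n) :
    ∃ l' : List ℕ, IsWord A l' ∧ l'.sum = n ∧ 0 < wordK P l' i j := by
  obtain ⟨r, hr, hrpos, hrsum⟩ := hN (n - l.sum) (by omega)
  refine ⟨l ++ r, hl.append hr, by rw [List.sum_append, hrsum]; omega, ?_⟩
  exact wordK_append_pos (fun a ha => hP a (hl.2 a ha)) (fun a ha => hP a (hr.2 a ha)) hrpos hpos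

end

lemma IsGCDOfSet.setGcd_eq {S : Set ℕ} {d : ℕ} (h : IsGCDOfSet S d) : Nat.setGcd S = d :=
  Nat.dvd_antisymm (h.2 _ fun _ => Nat.setGcd_dvd_of_mem) (Nat.dvd_setGcd_iff.mpr h.1)

lemma mem_of_mem_closure_of_add_mem {S : Set ℕ} (hadd : ∀ x ∈ S, ∀ y ∈ S, x + y ∈ S) {n : ℕ}
    (hn : n ∈ AddSubmonoid.closure S) (hn0 : n ≠ 0) : n ∈ S := by
  refine (?_ : n = 0 ∨ n ∈ S).resolve_left hn0
  clear hn0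
  induction hn using AddSubmonoid.closure_induction with
  | mem x hx => exact Or.inr hx
  | zero => exact Or.inl rfl
  | add x y _ _ hx hy =>
    rcases hx with rfl | hx
    · simpa using hy
    rcases hy with rfl | hy
    · simpa using Or.inr hx
    · exact Or.inr (hadd x hx y hy)

lemma exists_forall_ge_mem_of_add_mem {S : Set ℕ} (hadd : ∀ x ∈ S, ∀ y ∈ S, x + y ∈ S)
    (hgcd : IsGCDOfSet S 1) : ∃ N, ∀ n ≥ N, n ∈ S := by
  obtain ⟨N, hN⟩ := Nat.exists_mem_closure_of_ge S
  refine ⟨N + 1, fun n hn => mem_of_mem_closure_of_add_mem hadd (hN n (by omega) ?_) (by omega)⟩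
  rw [hgcd.setGcd_eq]
  exact one_dvd n

theorem stmt_14_general {G : Type*} [Fintype G] [DecidableEq G]
    (A : Set ℕ)
    (P : ℕ → G → G → ℝ)
    (hPnn : ∀ k ∈ A, ∀ i j : G, 0 ≤ P k i j)
    (hirr : ∀ i j : G, Communicates A P i j)
    (haper : ∀ i : G, IsGCDOfSet (ReturnDepths A P i) 1) :
    ∃ n₀ : ℕ, 0 < n₀ ∧ ∀ i j : G,
      ∃ l : List ℕ, IsWord A l ∧ l.sum = n₀ ∧ 0 < wordK P l i j := by
  choose N hN using fun i =>
    exists_forall_ge_mem_of_add_mem (fun _ hx _ hy => add_mem_returnDepths hPnn hx hy) (haper i)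
  choose w hw hwpos using hirr
  let n₀ := Finset.univ.sup (fun p : G × G => N p.1 + (w p.1 p.2).sum) + 1
  refine ⟨n₀, Nat.succ_pos _, fun i j => exists_word_sum_eq_of_ge hPnn (hw i j) (hwpos i j) (hN i) ?_⟩
  exact (Finset.le_sup (f := fun p : G × G => N p.1 + (w p.1 p.2).sum)
    (Finset.mem_univ (i, j))).trans (Nat.le_succ _)

/-- for an irreducible aperiodic `G`-stochastic function with
`gcd(A) = 1`, there is a common depth `n_0` connecting every pair of states. -/
theorem stmt_14 {G : Type*} [Fintype G] [DecidableEq G] [Nonempty G]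
    (A : Set ℕ) (hA : A.Nonempty) (hApos : ∀ k ∈ A, 0 < k)
    (P : ℕ → G → G → ℝ)
    (hPnn : ∀ k ∈ A, ∀ i j : G, 0 ≤ P k i j)
    (hProw : ∀ k ∈ A, ∀ i : G, ∑ j, P k i j = 1)
    (hirr : ∀ i j : G, Communicates A P i j)
    (hgcdA : IsGCDOfSet A 1)
    (haper : ∀ i : G, IsGCDOfSet (ReturnDepths A P i) 1) :
    ∃ n₀ : ℕ, 0 < n₀ ∧ ∀ i j : G,
      ∃ l : List ℕ, IsWord A l ∧ l.sum = n₀ ∧ 0 < wordK P l i j :=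
  stmt_14_general A P hPnn hirr haper
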